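/- arXiv:1901.10945 — 2 statements merged into one kernel-verified Lean document; each statement's English description precedes it below -/
import Mathlib

section
/- Let Λ be an infinite type and let 𝔏 denote the finite subsets (Finsets) of Λ. There exist a linearly ordered field K, a ring homomorphism ι : ℝ →+* K, and a surjective map J : (𝔏 → ℝ) → K such that: (i) J(φ + ψ) = J(φ) + J(ψ) for all nets φ, ψ (pointwise sum); (ii) J(φ · ψ) = J(φ) · J(ψ) (pointwise product); (iii) if there exists λ₀ ∈ 𝔏 such that φ(λ) ≥ ψ(λ) for every λ ⊇ λ₀, then J(φ) ≥ J(ψ); (iv) if there exists λ₀ ∈ 𝔏 and r ∈ ℝ such that φ(λ) = r for every λ ⊇ λ₀, then J(φ) = ι(r); and (v) K is non-Archimedean over ℝ: the element J(λ ↦ 1/(|λ|+1)) is positive and smaller than ι(1/n) for every positive natural number n. -/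
/-!
The Λ-limit is the passage to germs along an ultrafilter `U` refining the filter of tails
`{λ | λ₀ ⊆ λ}` (which is `atTop` on `Finset Λ`). The ultrapower `ℝ^𝔏 / U` is a linearly
ordered field, sums and products of germs are computed pointwise, and a property that holds on a
tail holds `U`-almost everywhere. Since `Λ` is infinite, `|λ| → ∞` along the tails, so
`λ ↦ 1/(|λ|+1)` is eventually below every `1/n` while staying positive.
-/

open Filter

theorem Finset.eventually_one_div_card_add_one_lt {α : Type*} [Infinite α] {ε : ℝ}
    (hε : 0 < ε) :
    ∀ᶠ s in (atTop : Filter (Finset α)), 1 / ((s.card : ℝ) + 1) < ε :=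
  ((tendsto_one_div_add_atTop_nhds_zero_nat.comp tendsto_card_atTop_atTop).eventually
    (gt_mem_nhds hε))

/-- Existence of a field of Euclidean numbers: a linearly ordered field `K` with
an embedding `ι : ℝ →+* K` and a surjective Λ-limit map `J` on nets that is
additive, multiplicative, monotone on eventually-ordered nets, sends eventually
constant nets to the corresponding real, and produces a nonzero infinitesimal
out of the net `λ ↦ 1/(|λ|+1)`. -/
theorem euclidean_numbers_exist (Λ : Type) [Infinite Λ] :
    ∃ (K : Type) (_ : Field K) (_ : LinearOrder K) (_ : IsStrictOrderedRing K) (ι : ℝ →+* K)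
      (J : (Finset Λ → ℝ) → K),
      Function.Surjective J ∧
      (∀ φ ψ : Finset Λ → ℝ, J (φ + ψ) = J φ + J ψ) ∧
      (∀ φ ψ : Finset Λ → ℝ, J (φ * ψ) = J φ * J ψ) ∧
      (∀ φ ψ : Finset Λ → ℝ,
        (∃ lam₀ : Finset Λ, ∀ lam : Finset Λ, lam₀ ⊆ lam → ψ lam ≤ φ lam) →
          J ψ ≤ J φ) ∧
      (∀ (φ : Finset Λ → ℝ) (r : ℝ),
        (∃ lam₀ : Finset Λ, ∀ lam : Finset Λ, lam₀ ⊆ lam → φ lam = r) →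
          J φ = ι r) ∧
      (0 < J (fun lam => 1 / ((lam.card : ℝ) + 1)) ∧
        ∀ n : ℕ, 0 < n →
          J (fun lam => 1 / ((lam.card : ℝ) + 1)) < ι (1 / (n : ℝ))) := by
  let U : Ultrafilter (Finset Λ) := Ultrafilter.of atTop
  have hU : (U : Filter (Finset Λ)) ≤ atTop := Ultrafilter.of_le _
  refine ⟨Germ (U : Filter (Finset Λ)) ℝ, inferInstance, inferInstance, inferInstance,
    (Germ.coeRingHom U).comp (Pi.constRingHom (Finset Λ) ℝ), (↑), Quot.mk_surjective,
    fun _ _ => rfl, fun _ _ => rfl,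
    fun _ _ h => Germ.coe_le.2 (hU (eventually_atTop.2 h)),
    fun _ _ h => Germ.coe_eq.2 (hU (eventually_atTop.2 h)),
    Germ.coe_pos.2 (Eventually.of_forall fun _ => by positivity),
    fun _ hn => Germ.coe_lt.2 <|
      hU (Finset.eventually_one_div_card_add_one_lt (one_div_pos.2 (Nat.cast_pos.2 hn)))⟩
end

section
/- Let V be a finite-dimensional complex inner product space (inner product conjugate-linear in the first argument), let A : V →ₗ[ℂ] V satisfy Re⟪A u, u⟫ ≥ 0 for all u ∈ V, let w ∈ V, τ ∈ ℝ with τ ≤ 0, E ∈ ℝ, and let u ∈ V with ‖u‖ = 1 satisfy A u + (τ : ℂ) • (⟪w, u⟫ • w) = (E : ℂ) • u. Then E ≥ τ · ‖w‖²; in particular, if E < 0 then |E| ≤ |τ| · ‖w‖². -/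
/-! Pairing the eigenvalue equation with the unit vector `u` gives the energy identity
`E = Re⟪A u, u⟫ + τ ‖⟪w, u⟫‖²`; the first term is nonnegative, and since `τ ≤ 0`,
Cauchy–Schwarz `‖⟪w, u⟫‖ ≤ ‖w‖` bounds the second from below by `τ ‖w‖²`. -/

open scoped InnerProductSpace

section RankOne

variable {𝕜 V : Type*} [RCLike 𝕜] [NormedAddCommGroup V] [InnerProductSpace 𝕜 V]

theorem inner_inner_smul_self_left (w u : V) :
    ⟪⟪w, u⟫_𝕜 • w, u⟫_𝕜 = (‖⟪w, u⟫_𝕜‖ ^ 2 : 𝕜) := by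
  rw [inner_smul_left, RCLike.conj_mul]

theorem re_inner_add_rankOne_smul (x w u : V) (τ : ℝ) :
    RCLike.re ⟪x + (τ : 𝕜) • (⟪w, u⟫_𝕜 • w), u⟫_𝕜
      = RCLike.re ⟪x, u⟫_𝕜 + τ * ‖⟪w, u⟫_𝕜‖ ^ 2 := by
  rw [inner_add_left, inner_smul_left, inner_inner_smul_self_left, RCLike.conj_ofReal,
    map_add, ← RCLike.ofReal_pow, ← RCLike.ofReal_mul, RCLike.ofReal_re]

theorem re_inner_eq_of_eq_smul_of_norm_eq_one {v u : V} {E : ℝ} (hu : ‖u‖ = 1)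
    (h : v = (E : 𝕜) • u) : RCLike.re ⟪v, u⟫_𝕜 = E := by
  rw [h, inner_smul_left, inner_self_eq_norm_sq_to_K, hu, RCLike.conj_ofReal]
  simp

theorem norm_inner_le_of_norm_le_one (w : V) {u : V} (hu : ‖u‖ ≤ 1) :
    ‖⟪w, u⟫_𝕜‖ ≤ ‖w‖ :=
  (norm_inner_le_norm w u).trans (mul_le_of_le_one_right (norm_nonneg w) hu)

end RankOne

theorem energy_bound_well_general {V : Type*} [NormedAddCommGroup V]
    [InnerProductSpace ℂ V]
    (A : V →ₗ[ℂ] V) (hA : ∀ u : V, 0 ≤ (⟪A u, u⟫_ℂ).re)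
    (w : V) (τ E : ℝ) (hτ : τ ≤ 0) (u : V) (hu : ‖u‖ = 1)
    (heq : A u + (τ : ℂ) • (⟪w, u⟫_ℂ • w) = (E : ℂ) • u) :
    τ * ‖w‖ ^ 2 ≤ E ∧ (E < 0 → |E| ≤ |τ| * ‖w‖ ^ 2) := by
  have henergy : (⟪A u, u⟫_ℂ).re + τ * ‖⟪w, u⟫_ℂ‖ ^ 2 = E :=
    (re_inner_add_rankOne_smul (A u) w u τ).symm.trans
      (re_inner_eq_of_eq_smul_of_norm_eq_one hu heq)
  have hwell : τ * ‖w‖ ^ 2 ≤ τ * ‖⟪w, u⟫_ℂ‖ ^ 2 :=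
    mul_le_mul_of_nonpos_left
      (pow_le_pow_left₀ (norm_nonneg _) (norm_inner_le_of_norm_le_one w hu.le) 2) hτ
  have hbound : τ * ‖w‖ ^ 2 ≤ E := by linarith [hA u]
  refine ⟨hbound, fun hE => ?_⟩
  rw [abs_of_neg hE, abs_of_nonpos hτ]
  linarith

open scoped InnerProductSpace in
/-- Energy bound for a normalized eigenstate of the Schrödinger operator with a
rank-one delta-potential well (`τ ≤ 0`): `E ≥ τ·‖w‖²`; in particular the
allowed negative energies satisfy `|E| ≤ |τ|·‖w‖²`. -/
theorem energy_bound_well {V : Type*} [NormedAddCommGroup V]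
    [InnerProductSpace ℂ V] [FiniteDimensional ℂ V]
    (A : V →ₗ[ℂ] V) (hA : ∀ u : V, 0 ≤ (⟪A u, u⟫_ℂ).re)
    (w : V) (τ E : ℝ) (hτ : τ ≤ 0) (u : V) (hu : ‖u‖ = 1)
    (heq : A u + (τ : ℂ) • (⟪w, u⟫_ℂ • w) = (E : ℂ) • u) :
    τ * ‖w‖ ^ 2 ≤ E ∧ (E < 0 → |E| ≤ |τ| * ‖w‖ ^ 2) :=
  energy_bound_well_general A hA w τ E hτ u hu heq
end
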